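/- A bounded sequence of real numbers (s_k) is almost convergent to s (i.e., L(s) = s for every Banach limit L on ℓ∞) if and only if (1/n)∑_{k=1}^n s_{k+l} → s as n → ∞, uniformly in l ∈ ℕ₀. -/

import Mathlib

/-!
Let `q x = upperBanachLimit x = lim_n sup_l (1/n) ∑_{k=1}^n x (k + l)`; the limit exists by
Fekete's lemma, the window sums being subadditive in `n`. This `q` is sublinear, and a linear
functional is a Banach limit if and only if it is dominated by `q`: averaging shifts shows `L ≤ q`
for a Banach limit `L`, and `q (Tx - x) ≤ 0` gives shift invariance conversely. By Hahn–Banach,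
`q x` is attained by some Banach limit, so `{L x | L Banach limit}` is exactly the interval
`[-q (-x), q x]`, and both sides of the theorem say that `q x ≤ s` and `q (-x) ≤ -s`.
-/

open Filter BoundedContinuousFunction

/-- The shift operator on ℓ∞ (bounded real sequences). -/
noncomputable def shiftBCF (x : ℕ →ᵇ ℝ) : ℕ →ᵇ ℝ :=
  x.compContinuous ⟨fun n => n + 1, continuous_of_discreteTopology⟩

/-- A Banach limit: a linear functional on ℓ∞ with `L(1)=1`, positivity and
shift-invariance. -/
def IsBanachLimit (L : (ℕ →ᵇ ℝ) →ₗ[ℝ] ℝ) : Prop :=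
  L 1 = 1 ∧ (∀ x : ℕ →ᵇ ℝ, (∀ n, 0 ≤ x n) → 0 ≤ L x) ∧
    ∀ x : ℕ →ᵇ ℝ, L (shiftBCF x) = L x

open Topology

theorem exists_linearMap_le_sublinear_apply_eq {E : Type*} [AddCommGroup E] [Module ℝ E]
    (N : E → ℝ) (N_hom : ∀ c : ℝ, 0 < c → ∀ x, N (c • x) = c * N x)
    (N_add : ∀ x y, N (x + y) ≤ N x + N y) (x : E) :
    ∃ g : E →ₗ[ℝ] ℝ, (∀ y, g y ≤ N y) ∧ g x = N x := by
  have N_zero : N 0 = 0 := by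
    have := N_hom 2 two_pos 0
    rw [smul_zero] at this
    linarith
  have mul_le_smul : ∀ c : ℝ, c * N x ≤ N (c • x) := by
    intro c
    rcases lt_trichotomy c 0 with hc | rfl | hc
    · have := N_add (c • x) ((-c) • x)
      rw [← add_smul, add_neg_cancel, zero_smul, N_zero, N_hom (-c) (neg_pos.2 hc)] at this
      linarith
    · simp [N_zero]
    · exact (N_hom c hc x).ge
  let f := LinearPMap.mkSpanSingleton' (σ := RingHom.id ℝ) x (N x) fun c hc => by
    rcases smul_eq_zero.1 hc with rfl | rfl
    · exact zero_smul ℝ _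
    · rw [N_zero, smul_zero]
  obtain ⟨g, hgf, hgN⟩ := exists_extension_of_le_sublinear f N N_hom N_add <| by
    rintro ⟨_, hz⟩
    obtain ⟨c, rfl⟩ := Submodule.mem_span_singleton.1 hz
    exact (LinearPMap.mkSpanSingleton'_apply _ _ _ c _).trans_le (mul_le_smul c)
  exact ⟨g, hgN, (hgf ⟨x, Submodule.mem_span_singleton_self x⟩).trans
    (LinearPMap.mkSpanSingleton'_apply_self _ _ _ _)⟩

@[simp] theorem shiftBCF_apply (x : ℕ →ᵇ ℝ) (m : ℕ) : shiftBCF x m = x (m + 1) := rfl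

theorem shiftBCF_iterate_apply (k : ℕ) (x : ℕ →ᵇ ℝ) (m : ℕ) :
    shiftBCF^[k] x m = x (m + k) := by
  induction k generalizing x with
  | zero => rfl
  | succ k ih => rw [Function.iterate_succ_apply, ih, shiftBCF_apply, add_assoc]

theorem shiftBCF_neg (x : ℕ →ᵇ ℝ) : shiftBCF (-x) = -shiftBCF x := rfl

noncomputable def windowSum (x : ℕ →ᵇ ℝ) (n l : ℕ) : ℝ := ∑ k ∈ Finset.Icc 1 n, x (k + l)

noncomputable def cesaroMean (x : ℕ →ᵇ ℝ) (n l : ℕ) : ℝ := 1 / (n : ℝ) * windowSum x n l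

theorem windowSum_add_length (x : ℕ →ᵇ ℝ) (m n l : ℕ) :
    windowSum x (m + n) l = windowSum x m l + windowSum x n (m + l) := by
  induction n with
  | zero => simp [windowSum]
  | succ n ih =>
    simp only [windowSum] at ih ⊢
    rw [← add_assoc, Finset.sum_Icc_succ_top (by omega), Finset.sum_Icc_succ_top (by omega), ih,
      add_assoc, show m + n + 1 + l = n + 1 + (m + l) by omega]

theorem windowSum_shiftBCF_sub (x : ℕ →ᵇ ℝ) (n l : ℕ) :
    windowSum (shiftBCF x - x) n l = x (n + l + 1) - x (l + 1) := by
  induction n with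
  | zero => simp [windowSum]
  | succ n ih =>
    rw [windowSum, Finset.sum_Icc_succ_top (by omega), ← windowSum, ih]
    simp only [coe_sub, Pi.sub_apply, shiftBCF_apply]
    ring_nf

theorem abs_windowSum_le (x : ℕ →ᵇ ℝ) (n l : ℕ) : |windowSum x n l| ≤ n * ‖x‖ := by
  calc |windowSum x n l| ≤ ∑ k ∈ Finset.Icc 1 n, |x (k + l)| := Finset.abs_sum_le_sum_abs _ _
    _ ≤ ∑ k ∈ Finset.Icc 1 n, ‖x‖ := Finset.sum_le_sum fun k _ => x.norm_coe_le_norm (k + l)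
    _ = n * ‖x‖ := by simp

theorem windowSum_add (x y : ℕ →ᵇ ℝ) (n l : ℕ) :
    windowSum (x + y) n l = windowSum x n l + windowSum y n l :=
  Finset.sum_add_distrib

theorem windowSum_smul (c : ℝ) (x : ℕ →ᵇ ℝ) (n l : ℕ) :
    windowSum (c • x) n l = c * windowSum x n l :=
  (Finset.mul_sum _ _ _).symm

theorem abs_cesaroMean_le (x : ℕ →ᵇ ℝ) (n l : ℕ) : |cesaroMean x n l| ≤ ‖x‖ := by
  rw [cesaroMean, abs_mul, abs_of_nonneg (by positivity)]
  rcases Nat.eq_zero_or_pos n with rfl | hn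
  · simp
  · calc 1 / (n : ℝ) * |windowSum x n l| ≤ 1 / n * (n * ‖x‖) := by
          gcongr; exact abs_windowSum_le x n l
      _ = ‖x‖ := by field_simp

theorem cesaroMean_add (x y : ℕ →ᵇ ℝ) (n l : ℕ) :
    cesaroMean (x + y) n l = cesaroMean x n l + cesaroMean y n l := by
  rw [cesaroMean, windowSum_add, mul_add, ← cesaroMean, ← cesaroMean]

theorem cesaroMean_smul (c : ℝ) (x : ℕ →ᵇ ℝ) (n l : ℕ) :
    cesaroMean (c • x) n l = c * cesaroMean x n l := by
  rw [cesaroMean, windowSum_smul, mul_left_comm, ← cesaroMean]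

theorem cesaroMean_neg (x : ℕ →ᵇ ℝ) (n l : ℕ) : cesaroMean (-x) n l = -cesaroMean x n l := by
  rw [← neg_one_smul ℝ x, cesaroMean_smul, neg_one_mul]

theorem cesaroMean_le_of_forall_le {x : ℕ →ᵇ ℝ} {c : ℝ} (h : ∀ m, x m ≤ c) {n : ℕ} (hn : 1 ≤ n)
    (l : ℕ) : cesaroMean x n l ≤ c := by
  calc cesaroMean x n l ≤ 1 / n * ∑ k ∈ Finset.Icc 1 n, c := by
        rw [cesaroMean, windowSum]; gcongr with k; exact h _
    _ = c := by
        have : (n : ℝ) ≠ 0 := by positivity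
        simp [field]

noncomputable def maxWindowSum (x : ℕ →ᵇ ℝ) (n : ℕ) : ℝ := ⨆ l, windowSum x n l

theorem bddAbove_range_windowSum (x : ℕ →ᵇ ℝ) (n : ℕ) : BddAbove (Set.range (windowSum x n)) :=
  ⟨n * ‖x‖, Set.forall_mem_range.2 fun l => (abs_le.1 (abs_windowSum_le x n l)).2⟩

theorem windowSum_le_maxWindowSum (x : ℕ →ᵇ ℝ) (n l : ℕ) : windowSum x n l ≤ maxWindowSum x n :=
  le_ciSup (bddAbove_range_windowSum x n) l

theorem cesaroMean_le_maxWindowSum_div (x : ℕ →ᵇ ℝ) (n l : ℕ) :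
    cesaroMean x n l ≤ maxWindowSum x n / n := by
  rw [cesaroMean, one_div_mul_eq_div]
  gcongr
  exact windowSum_le_maxWindowSum x n l

theorem maxWindowSum_div_le {x : ℕ →ᵇ ℝ} {n : ℕ} {b : ℝ} (h : ∀ l, cesaroMean x n l ≤ b) :
    maxWindowSum x n / n ≤ b := by
  rcases Nat.eq_zero_or_pos n with rfl | hn
  · simpa [cesaroMean] using h 0
  · rw [div_le_iff₀ (by exact_mod_cast hn)]
    refine ciSup_le fun l => ?_
    have := h l
    rw [cesaroMean, one_div_mul_eq_div, div_le_iff₀ (by exact_mod_cast hn)] at this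
    exact this

theorem subadditive_maxWindowSum (x : ℕ →ᵇ ℝ) : Subadditive (maxWindowSum x) := fun m n =>
  ciSup_le fun l => (windowSum_add_length x m n l).trans_le <|
    add_le_add (windowSum_le_maxWindowSum x m l) (windowSum_le_maxWindowSum x n (m + l))

theorem bddBelow_range_maxWindowSum_div (x : ℕ →ᵇ ℝ) :
    BddBelow (Set.range fun n : ℕ => maxWindowSum x n / n) :=
  ⟨-‖x‖, Set.forall_mem_range.2 fun n =>
    (abs_le.1 (abs_cesaroMean_le x n 0)).1.trans (cesaroMean_le_maxWindowSum_div x n 0)⟩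

noncomputable def upperBanachLimit (x : ℕ →ᵇ ℝ) : ℝ := (subadditive_maxWindowSum x).lim

theorem tendsto_maxWindowSum_div (x : ℕ →ᵇ ℝ) :
    Tendsto (fun n : ℕ => maxWindowSum x n / n) atTop (𝓝 (upperBanachLimit x)) :=
  (subadditive_maxWindowSum x).tendsto_lim (bddBelow_range_maxWindowSum_div x)

theorem upperBanachLimit_le_of_tendsto {x : ℕ →ᵇ ℝ} {b : ℕ → ℝ} {c : ℝ}
    (hb : Tendsto b atTop (𝓝 c)) (h : ∀ᶠ n in atTop, ∀ l, cesaroMean x n l ≤ b n) :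
    upperBanachLimit x ≤ c :=
  le_of_tendsto_of_tendsto (tendsto_maxWindowSum_div x) hb (h.mono fun _ => maxWindowSum_div_le)

theorem eventually_cesaroMean_lt {x : ℕ →ᵇ ℝ} {c : ℝ} (h : upperBanachLimit x < c) :
    ∀ᶠ n in atTop, ∀ l, cesaroMean x n l < c :=
  ((tendsto_maxWindowSum_div x).eventually_lt_const h).mono fun n hn l =>
    (cesaroMean_le_maxWindowSum_div x n l).trans_lt hn

theorem upperBanachLimit_add_le (x y : ℕ →ᵇ ℝ) :
    upperBanachLimit (x + y) ≤ upperBanachLimit x + upperBanachLimit y :=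
  upperBanachLimit_le_of_tendsto ((tendsto_maxWindowSum_div x).add (tendsto_maxWindowSum_div y)) <|
    .of_forall fun n l => (cesaroMean_add x y n l).trans_le <|
      add_le_add (cesaroMean_le_maxWindowSum_div x n l) (cesaroMean_le_maxWindowSum_div y n l)

theorem upperBanachLimit_smul_le {c : ℝ} (hc : 0 ≤ c) (x : ℕ →ᵇ ℝ) :
    upperBanachLimit (c • x) ≤ c * upperBanachLimit x :=
  upperBanachLimit_le_of_tendsto ((tendsto_maxWindowSum_div x).const_mul c) <|
    .of_forall fun n l => (cesaroMean_smul c x n l).trans_le <|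
      mul_le_mul_of_nonneg_left (cesaroMean_le_maxWindowSum_div x n l) hc

theorem upperBanachLimit_smul {c : ℝ} (hc : 0 < c) (x : ℕ →ᵇ ℝ) :
    upperBanachLimit (c • x) = c * upperBanachLimit x := by
  refine (upperBanachLimit_smul_le hc.le x).antisymm ?_
  have := upperBanachLimit_smul_le (inv_nonneg.2 hc.le) (c • x)
  rw [inv_smul_smul₀ hc.ne'] at this
  rwa [← le_inv_mul_iff₀ hc]

theorem upperBanachLimit_le_of_forall_le {x : ℕ →ᵇ ℝ} {c : ℝ} (h : ∀ m, x m ≤ c) :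
    upperBanachLimit x ≤ c :=
  upperBanachLimit_le_of_tendsto tendsto_const_nhds <|
    (eventually_ge_atTop 1).mono fun _ hn => cesaroMean_le_of_forall_le h hn

theorem upperBanachLimit_shiftBCF_sub_nonpos (x : ℕ →ᵇ ℝ) :
    upperBanachLimit (shiftBCF x - x) ≤ 0 := by
  refine upperBanachLimit_le_of_tendsto (tendsto_const_div_atTop_nhds_zero_nat (2 * ‖x‖)) <|
    .of_forall fun n l => ?_
  have h₁ := abs_le.1 (x.norm_coe_le_norm (n + l + 1))
  have h₂ := abs_le.1 (x.norm_coe_le_norm (l + 1))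
  rw [cesaroMean, windowSum_shiftBCF_sub, one_div_mul_eq_div]
  gcongr
  linarith [h₁.2, h₂.1]

namespace IsBanachLimit

variable {L : (ℕ →ᵇ ℝ) →ₗ[ℝ] ℝ}

theorem apply_le_of_forall_le (hL : IsBanachLimit L) {y : ℕ →ᵇ ℝ} {c : ℝ} (h : ∀ m, y m ≤ c) :
    L y ≤ c := by
  have := hL.2.1 (c • 1 - y) fun m => by simpa using h m
  rw [map_sub, map_smul, hL.1, smul_eq_mul, mul_one] at this
  linarith

theorem apply_shiftBCF_iterate (hL : IsBanachLimit L) (k : ℕ) (y : ℕ →ᵇ ℝ) :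
    L (shiftBCF^[k] y) = L y := by
  induction k with
  | zero => rfl
  | succ k ih => rw [Function.iterate_succ_apply', hL.2.2, ih]

theorem apply_le_upperBanachLimit (hL : IsBanachLimit L) (x : ℕ →ᵇ ℝ) :
    L x ≤ upperBanachLimit x := by
  refine ge_of_tendsto (tendsto_maxWindowSum_div x) <|
    (eventually_ge_atTop 1).mono fun n hn => ?_
  set y : ℕ →ᵇ ℝ := (1 / (n : ℝ)) • ∑ k ∈ Finset.Icc 1 n, shiftBCF^[k] x
  have hLy : L y = L x := by
    have : (n : ℝ) ≠ 0 := by positivity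
    simp [y, hL.apply_shiftBCF_iterate, field]
  have hy (m : ℕ) : y m = cesaroMean x n m := by
    simp [y, cesaroMean, windowSum, shiftBCF_iterate_apply, add_comm]
  rw [← hLy]
  exact hL.apply_le_of_forall_le fun m => (hy m).trans_le (cesaroMean_le_maxWindowSum_div x n m)

end IsBanachLimit

theorem isBanachLimit_of_le_upperBanachLimit {L : (ℕ →ᵇ ℝ) →ₗ[ℝ] ℝ}
    (hL : ∀ y, L y ≤ upperBanachLimit y) : IsBanachLimit L := by
  have h_one := (hL 1).trans (upperBanachLimit_le_of_forall_le (c := 1) fun _ => le_rfl)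
  have h_neg_one := (hL (-1)).trans (upperBanachLimit_le_of_forall_le (c := -1) fun _ => le_rfl)
  rw [map_neg] at h_neg_one
  refine ⟨by linarith, fun y hy => ?_, fun y => ?_⟩
  · have := (hL (-y)).trans (upperBanachLimit_le_of_forall_le fun m => neg_nonpos.2 (hy m))
    rw [map_neg] at this
    linarith
  · have h₁ := (hL (shiftBCF y - y)).trans (upperBanachLimit_shiftBCF_sub_nonpos y)
    have h₂ := (hL (shiftBCF (-y) - -y)).trans (upperBanachLimit_shiftBCF_sub_nonpos (-y))
    rw [shiftBCF_neg, map_sub, map_neg, map_neg] at h₂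
    rw [map_sub] at h₁
    linarith

theorem exists_isBanachLimit_apply_eq_upperBanachLimit (x : ℕ →ᵇ ℝ) :
    ∃ L : (ℕ →ᵇ ℝ) →ₗ[ℝ] ℝ, IsBanachLimit L ∧ L x = upperBanachLimit x := by
  have := exists_linearMap_le_sublinear_apply_eq upperBanachLimit
    (fun _ => upperBanachLimit_smul) upperBanachLimit_add_le
  obtain ⟨L, hL, hLx⟩ := this x
  exact ⟨L, isBanachLimit_of_le_upperBanachLimit hL, hLx⟩

theorem forall_isBanachLimit_apply_eq_iff (x : ℕ →ᵇ ℝ) (s : ℝ) :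
    (∀ L : (ℕ →ᵇ ℝ) →ₗ[ℝ] ℝ, IsBanachLimit L → L x = s) ↔
      upperBanachLimit x ≤ s ∧ upperBanachLimit (-x) ≤ -s := by
  constructor
  · intro h
    obtain ⟨L₁, hL₁, hL₁x⟩ := exists_isBanachLimit_apply_eq_upperBanachLimit x
    obtain ⟨L₂, hL₂, hL₂x⟩ := exists_isBanachLimit_apply_eq_upperBanachLimit (-x)
    rw [map_neg, h L₂ hL₂] at hL₂x
    exact ⟨(hL₁x.symm.trans (h L₁ hL₁)).le, hL₂x.ge⟩
  · rintro ⟨hx, hnx⟩ L hL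
    have h₁ := (hL.apply_le_upperBanachLimit x).trans hx
    have h₂ := (hL.apply_le_upperBanachLimit (-x)).trans hnx
    rw [map_neg] at h₂
    linarith

theorem tendstoUniformly_cesaroMean_iff (x : ℕ →ᵇ ℝ) (s : ℝ) :
    TendstoUniformly (cesaroMean x) (fun _ => s) atTop ↔
      upperBanachLimit x ≤ s ∧ upperBanachLimit (-x) ≤ -s := by
  simp only [Metric.tendstoUniformly_iff, Real.dist_eq, abs_sub_lt_iff]
  constructor
  · intro h
    refine ⟨le_of_forall_pos_le_add fun ε hε => ?_, le_of_forall_pos_le_add fun ε hε => ?_⟩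
    · exact upperBanachLimit_le_of_tendsto tendsto_const_nhds <|
        (h ε hε).mono fun n hn l => by linarith [hn l]
    · exact upperBanachLimit_le_of_tendsto tendsto_const_nhds <|
        (h ε hε).mono fun n hn l => by linarith [hn l, cesaroMean_neg x n l]
  · rintro ⟨hx, hnx⟩ ε hε
    filter_upwards [eventually_cesaroMean_lt (x := x) (c := s + ε) (by linarith),
      eventually_cesaroMean_lt (x := -x) (c := -s + ε) (by linarith)] with n h₁ h₂ l
    constructor <;> linarith [h₁ l, h₂ l, cesaroMean_neg x n l]

/-- Lorentz's theorem: a bounded real sequence is almost convergent to `s`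
iff its shifted Cesàro means converge to `s` uniformly in the shift. -/
theorem almost_convergent_iff_uniform_cesaro (x : ℕ →ᵇ ℝ) (s : ℝ) :
    (∀ L : (ℕ →ᵇ ℝ) →ₗ[ℝ] ℝ, IsBanachLimit L → L x = s) ↔
      TendstoUniformly
        (fun (n : ℕ) (l : ℕ) => (1 / (n : ℝ)) * ∑ k ∈ Finset.Icc 1 n, x (k + l))
        (fun _ => s) atTop :=
  (forall_isBanachLimit_apply_eq_iff x s).trans (tendstoUniformly_cesaroMean_iff x s).symm
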